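/- arXiv:1801.08059 — 3 statements merged into one kernel-verified Lean document; each statement's English description precedes it below -/
import Mathlib

section
/- Let G_n = F^{⊗r} over F_q with n = 2^r, built recursively via G_n = [[G_{n/2}, 0],[α^{i_r} G_{n/2}, G_{n/2}]] with G_1 = [1] and all multipliers α^{i_j} ∈ F_q nonzero. Then for each 1 ≤ i ≤ n, the Hamming weight (number of nonzero entries) of the i-th row of G_n equals 2^{wt(i−1)}, where wt(k) denotes the number of ones in the binary expansion of k. -/
/-- The 2×2 polarization kernel `[[1,0],[β,1]]` over a field. -/
def kern {F : Type} [Field F] (β : F) : Matrix (Fin 2) (Fin 2) F := !![1, 0; β, 1]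

/-- The recursively-defined polar transform matrix `G_{2^r}` over `F_q`:
`G_1 = [1]` and `G_{2^{r+1}} = [[G_{2^r}, 0], [β_{r+1} G_{2^r}, G_{2^r}]]`. -/
def polarG {F : Type} [Field F] (β : ℕ → F) : (r : ℕ) → Matrix (Fin (2 ^ r)) (Fin (2 ^ r)) F
  | 0 => 1
  | r + 1 => Matrix.of fun i j =>
      kern (β (r + 1))
          ⟨i.val / 2 ^ r, by
            exact Nat.div_lt_of_lt_mul (by rw [← pow_succ]; exact i.isLt)⟩
          ⟨j.val / 2 ^ r, by
            exact Nat.div_lt_of_lt_mul (by rw [← pow_succ]; exact j.isLt)⟩ *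
        polarG β r ⟨i.val % 2 ^ r, Nat.mod_lt _ (pow_pos (by norm_num) r)⟩
          ⟨j.val % 2 ^ r, Nat.mod_lt _ (pow_pos (by norm_num) r)⟩
/-- Number of ones in the binary expansion of `k`. -/
def wt (k : ℕ) : ℕ := (Nat.digits 2 k).sum

lemma wt_rec (k : ℕ) : wt k = k % 2 + wt (k / 2) := by
  rcases Nat.eq_zero_or_pos k with h | h
  · simp [h, wt]
  · rw [wt, Nat.digits_def' (by norm_num : 1 < 2) h, List.sum_cons]; rfl

lemma wt_add_pow : ∀ r x, x < 2 ^ r → wt (x + 2 ^ r) = wt x + 1 := by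
  intro r
  induction r with
  | zero =>
    intro x hx
    interval_cases x
    simp [wt]
  | succ r ih =>
    intro x hx
    have e : 2 ^ (r + 1) = 2 * 2 ^ r := by ring
    rw [wt_rec (x + 2 ^ (r + 1)), wt_rec x]
    have h2 : (x + 2 ^ (r + 1)) % 2 = x % 2 := by omega
    have h3 : (x + 2 ^ (r + 1)) / 2 = x / 2 + 2 ^ r := by omega
    rw [h2, h3, ih (x / 2) (by omega)]
    omega

open Classical in
lemma auxstmt {F : Type} [Field F] (β : ℕ → F) (hβ : ∀ j, β j ≠ 0) :
    ∀ (r : ℕ) (i : Fin (2 ^ r)),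
    (Finset.univ.filter fun j : Fin (2 ^ r) => polarG β r i j ≠ 0).card = 2 ^ wt (i : ℕ) := by
  intro r
  induction r with
  | zero =>
    intro i
    have h1 : ∀ j : Fin (2 ^ 0), polarG β 0 i j ≠ 0 := by
      intro j
      have hij : i = j := by ext; omega
      subst hij
      simp [polarG, Matrix.one_apply]
    rw [Finset.filter_true_of_mem (fun j _ => h1 j)]
    have hi0 : (i : ℕ) = 0 := by omega
    simp [hi0, wt]
  | succ r ih =>
    intro i
    have hnpos : 0 < 2 ^ r := pow_pos (by norm_num) r
    have hia : i.val / 2 ^ r < 2 := Nat.div_lt_of_lt_mul (by rw [← pow_succ]; exact i.isLt)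
    set ia : Fin 2 := ⟨i.val / 2 ^ r, hia⟩ with hiadef
    set ib : Fin (2 ^ r) := ⟨i.val % 2 ^ r, Nat.mod_lt _ hnpos⟩ with hibdef
    have key : (Finset.univ.filter fun j : Fin (2 ^ (r + 1)) => polarG β (r + 1) i j ≠ 0).card
        = ((Finset.univ.filter fun p : Fin 2 × Fin (2 ^ r) =>
            kern (β (r + 1)) ia p.1 ≠ 0 ∧ polarG β r ib p.2 ≠ 0)).card := by
      refine Finset.card_bij'
        (fun j _ => (⟨j.val / 2 ^ r, Nat.div_lt_of_lt_mul (by rw [← pow_succ]; exact j.isLt)⟩,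
          ⟨j.val % 2 ^ r, Nat.mod_lt _ hnpos⟩))
        (fun p _ => ⟨p.2.val + 2 ^ r * p.1.val, by
          have h1 := p.1.isLt; have h2 := p.2.isLt
          have e : 2 ^ (r + 1) = 2 * 2 ^ r := by ring
          have h3 : 2 ^ r * p.1.val ≤ 2 ^ r * 1 := Nat.mul_le_mul_left _ (by omega)
          omega⟩) ?_ ?_ ?_ ?_
      · intro j hj
        simp only [Finset.mem_filter, Finset.mem_univ, true_and] at hj ⊢
        simp only [polarG, Matrix.of_apply, ne_eq, mul_eq_zero, not_or] at hj
        exact hj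
      · intro p hp
        simp only [Finset.mem_filter, Finset.mem_univ, true_and] at hp ⊢
        simp only [polarG, Matrix.of_apply, ne_eq, mul_eq_zero, not_or]
        have hc : p.1.val = 0 ∨ p.1.val = 1 := by omega
        have h1 : (p.2.val + 2 ^ r * p.1.val) / 2 ^ r = p.1.val := by
          rcases hc with h | h <;> simp only [h, Nat.mul_zero, Nat.mul_one, Nat.add_zero]
          · exact Nat.div_eq_of_lt p.2.isLt
          · rw [Nat.add_div_right _ hnpos, Nat.div_eq_of_lt p.2.isLt]
        have h2 : (p.2.val + 2 ^ r * p.1.val) % 2 ^ r = p.2.val := by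
          rcases hc with h | h <;> simp only [h, Nat.mul_zero, Nat.mul_one, Nat.add_zero]
          · exact Nat.mod_eq_of_lt p.2.isLt
          · rw [Nat.add_mod_right, Nat.mod_eq_of_lt p.2.isLt]
        constructor
        · exact fun hz => hp.1 ((congrArg (kern (β (r + 1)) ia) (Fin.ext h1)).symm.trans hz)
        · exact fun hz => hp.2 ((congrArg (polarG β r ib) (Fin.ext h2)).symm.trans hz)
      · intro j hj
        ext
        show (j : ℕ) % 2 ^ r + 2 ^ r * ((j : ℕ) / 2 ^ r) = (j : ℕ)
        exact Nat.mod_add_div _ _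
      · intro p hp
        have hc : p.1.val = 0 ∨ p.1.val = 1 := by omega
        have h1 : (p.2.val + 2 ^ r * p.1.val) / 2 ^ r = p.1.val := by
          rcases hc with h | h <;> simp only [h, Nat.mul_zero, Nat.mul_one, Nat.add_zero]
          · exact Nat.div_eq_of_lt p.2.isLt
          · rw [Nat.add_div_right _ hnpos, Nat.div_eq_of_lt p.2.isLt]
        have h2 : (p.2.val + 2 ^ r * p.1.val) % 2 ^ r = p.2.val := by
          rcases hc with h | h <;> simp only [h, Nat.mul_zero, Nat.mul_one, Nat.add_zero]
          · exact Nat.mod_eq_of_lt p.2.isLt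
          · rw [Nat.add_mod_right, Nat.mod_eq_of_lt p.2.isLt]
        ext
        · show (p.2.val + 2 ^ r * p.1.val) / 2 ^ r = p.1.val; exact h1
        · show (p.2.val + 2 ^ r * p.1.val) % 2 ^ r = p.2.val; exact h2
    rw [key]
    rw [← Finset.univ_product_univ,
      Finset.filter_product (fun a : Fin 2 => kern (β (r + 1)) ia a ≠ 0)
        (fun b : Fin (2 ^ r) => polarG β r ib b ≠ 0),
      Finset.card_product, ih ib]
    have hkern : (Finset.univ.filter fun a : Fin 2 => kern (β (r + 1)) ia a ≠ 0).card
        = 2 ^ (ia : ℕ) := by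
      have h01 : (ia : ℕ) = 0 ∨ (ia : ℕ) = 1 := by omega
      rcases h01 with h | h
      · have : ia = 0 := by ext; exact h
        rw [this]
        have : (Finset.univ.filter fun a : Fin 2 => kern (β (r + 1)) (0 : Fin 2) a ≠ 0)
            = {0} := by
          ext a
          fin_cases a <;> simp [kern]
        rw [this]; simp
      · have : ia = 1 := by ext; exact h
        rw [this]
        have : (Finset.univ.filter fun a : Fin 2 => kern (β (r + 1)) (1 : Fin 2) a ≠ 0)
            = Finset.univ := by
          ext a
          fin_cases a <;> simp [kern, hβ]
        rw [this]; simp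
    rw [hkern, ← pow_add]
    congr 1
    have hib' : (ib : ℕ) = i.val % 2 ^ r := rfl
    have hia' : (ia : ℕ) = i.val / 2 ^ r := rfl
    have hmd := Nat.mod_add_div (i : ℕ) (2 ^ r)
    rcases (Nat.le_one_iff_eq_zero_or_eq_one.mp (Nat.lt_succ_iff.mp hia) : (i : ℕ) / 2 ^ r = 0 ∨ (i : ℕ) / 2 ^ r = 1) with h | h
    · rw [hia', hib', h]
      rw [h, Nat.mul_zero, Nat.add_zero] at hmd
      rw [hmd]
      omega
    · rw [hia', hib', h]
      rw [h, Nat.mul_one] at hmd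
      conv_rhs => rw [← hmd]
      rw [wt_add_pow r _ (Nat.mod_lt _ hnpos)]
      omega


open Classical in
/-- For nonzero multipliers, the Hamming weight (number of nonzero
entries) of row `i` (zero-based) of `G_n = F^{⊗r}` equals `2 ^ wt(i)`. -/
theorem stmt2 {F : Type} [Field F] (β : ℕ → F) (hβ : ∀ j, β j ≠ 0) (r : ℕ)
    (i : Fin (2 ^ r)) :
    (Finset.univ.filter fun j : Fin (2 ^ r) => polarG β r i j ≠ 0).card = 2 ^ wt (i : ℕ) := by
  exact auxstmt β hβ r i
end

section
/- Let G_n over F_q be defined recursively by G_1 = [1] and G_n = [[G_{n/2}, 0],[β_r G_{n/2}, G_{n/2}]] for n = 2^r, with nonzero multipliers β_j ∈ F_q^*. If u = (u_1,…,u_n) ∈ F_q^n satisfies u_1 = … = u_{i−1} = 0 and u_i ≠ 0, then the Hamming weight of the codeword c = u G_n satisfies d(c) ≥ 2^{wt(i−1)}, where wt(i−1) is the number of ones in the binary expansion of i−1. -/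
section Hamming

variable {ι κ F : Type*} [Fintype ι] [Fintype κ] [DecidableEq F]

theorem hammingNorm_comp_equiv [Zero F] (x : ι → F) (e : κ ≃ ι) :
    hammingNorm (x ∘ e) = hammingNorm x := by
  simp only [hammingNorm, Finset.card_filter, Function.comp_apply]
  exact e.sum_comp fun i => if x i ≠ 0 then 1 else 0

theorem hammingNorm_sumElim [Zero F] (x : ι → F) (y : κ → F) :
    hammingNorm (Sum.elim x y) = hammingNorm x + hammingNorm y := by
  simp only [hammingNorm, Finset.card_filter, Fintype.sum_sum_type, Sum.elim_inl, Sum.elim_inr]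
  rfl

theorem hammingNorm_sub_le [AddGroup F] (x y : ι → F) :
    hammingNorm (x - y) ≤ hammingNorm x + hammingNorm y := by
  classical
  refine (Finset.card_le_card fun i hi => ?_).trans (Finset.card_union_le _ _)
  simp only [Finset.mem_filter, Finset.mem_union, Finset.mem_univ, true_and, Pi.sub_apply] at hi ⊢
  by_contra! h
  simp [h.1, h.2] at hi

end Hamming

theorem wt_eq_mod_two_add_wt_div_two (m : ℕ) : wt m = m % 2 + wt (m / 2) := by
  rcases Nat.eq_zero_or_pos m with rfl | hm
  · rfl
  · rw [wt, Nat.digits_def' one_lt_two hm, List.sum_cons, wt]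

theorem wt_two_pow_add {r m : ℕ} (hm : m < 2 ^ r) : wt (2 ^ r + m) = wt m + 1 := by
  induction r generalizing m with
  | zero =>
    obtain rfl : m = 0 := by omega
    rfl
  | succ r ih =>
    have hdiv : (2 ^ (r + 1) + m) / 2 = 2 ^ r + m / 2 := by omega
    have hmod : (2 ^ (r + 1) + m) % 2 = m % 2 := by omega
    rw [wt_eq_mod_two_add_wt_div_two, hdiv, hmod, ih (by omega), wt_eq_mod_two_add_wt_div_two m]
    ring

def halvesEquiv (r : ℕ) : Fin (2 ^ r) ⊕ Fin (2 ^ r) ≃ Fin (2 ^ (r + 1)) :=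
  finSumFinEquiv.trans (finCongr (by rw [pow_succ, mul_two]))

@[simp] theorem halvesEquiv_inl_val (r : ℕ) (k : Fin (2 ^ r)) :
    (halvesEquiv r (Sum.inl k) : ℕ) = k := rfl

@[simp] theorem halvesEquiv_inr_val (r : ℕ) (k : Fin (2 ^ r)) :
    (halvesEquiv r (Sum.inr k) : ℕ) = 2 ^ r + k := rfl

section PolarG

open Matrix

variable {F : Type} [Field F] (β : ℕ → F)

theorem polarG_succ (r : ℕ) :
    polarG β (r + 1) =
      (fromBlocks (polarG β r) 0 (β (r + 1) • polarG β r) (polarG β r)).submatrix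
        (halvesEquiv r).symm (halvesEquiv r).symm := by
  ext i j
  obtain ⟨x, rfl⟩ := (halvesEquiv r).surjective i
  obtain ⟨y, rfl⟩ := (halvesEquiv r).surjective j
  have hp : 0 < 2 ^ r := by positivity
  rcases x with k | k <;> rcases y with l | l <;>
    simp [polarG, kern, Nat.div_eq_of_lt, Nat.mod_eq_of_lt, Nat.add_div_left _ hp]

theorem vecMul_polarG_succ_comp_halvesEquiv (r : ℕ) (u : Fin (2 ^ (r + 1)) → F) :
    (u ᵥ* polarG β (r + 1)) ∘ halvesEquiv r =
      Sum.elim ((u ∘ halvesEquiv r ∘ Sum.inl + β (r + 1) • u ∘ halvesEquiv r ∘ Sum.inr) ᵥ*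
          polarG β r)
        ((u ∘ halvesEquiv r ∘ Sum.inr) ᵥ* polarG β r) := by
  rw [polarG_succ, submatrix_vecMul_equiv, Equiv.symm_symm, Function.comp_assoc,
    Equiv.symm_comp_self, Function.comp_id, vecMul_fromBlocks]
  simp [vecMul_smul, smul_vecMul, add_vecMul, Function.comp_assoc]

theorem hammingNorm_vecMul_polarG_succ [DecidableEq F] (r : ℕ) (u : Fin (2 ^ (r + 1)) → F) :
    hammingNorm (u ᵥ* polarG β (r + 1)) =
      hammingNorm ((u ∘ halvesEquiv r ∘ Sum.inl + β (r + 1) • u ∘ halvesEquiv r ∘ Sum.inr) ᵥ*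
          polarG β r) +
        hammingNorm ((u ∘ halvesEquiv r ∘ Sum.inr) ᵥ* polarG β r) := by
  rw [← hammingNorm_comp_equiv _ (halvesEquiv r), vecMul_polarG_succ_comp_halvesEquiv,
    hammingNorm_sumElim]

theorem two_pow_wt_le_hammingNorm_vecMul_polarG [DecidableEq F] (hβ : ∀ j, β j ≠ 0) (r : ℕ)
    (u : Fin (2 ^ r) → F) (i : Fin (2 ^ r)) (h0 : ∀ j < i, u j = 0) (hi : u i ≠ 0) :
    2 ^ wt i ≤ hammingNorm (u ᵥ* polarG β r) := by
  induction r with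
  | zero =>
    have hu : u ≠ 0 := fun h => hi (congrFun h i)
    simp [polarG, wt, Nat.one_le_iff_ne_zero, hu]
  | succ r ih =>
    rw [hammingNorm_vecMul_polarG_succ]
    set u₀ := u ∘ halvesEquiv r ∘ Sum.inl
    set u₁ := u ∘ halvesEquiv r ∘ Sum.inr
    set b := β (r + 1)
    obtain ⟨x, rfl⟩ := (halvesEquiv r).surjective i
    rcases x with i | i
    · have hsplit : u₀ ᵥ* polarG β r = (u₀ + b • u₁) ᵥ* polarG β r - b • u₁ ᵥ* polarG β r := by
        rw [add_vecMul, smul_vecMul, add_sub_cancel_right]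
      calc 2 ^ wt (halvesEquiv r (Sum.inl i)) = 2 ^ wt i := rfl
        _ ≤ hammingNorm (u₀ ᵥ* polarG β r) :=
          ih u₀ i (fun j hj => h0 _ (Fin.lt_def.2 hj)) hi
        _ ≤ hammingNorm ((u₀ + b • u₁) ᵥ* polarG β r) + hammingNorm (b • u₁ ᵥ* polarG β r) :=
          hsplit ▸ hammingNorm_sub_le _ _
        _ ≤ hammingNorm ((u₀ + b • u₁) ᵥ* polarG β r) + hammingNorm (u₁ ᵥ* polarG β r) := by
          gcongr
          exact hammingNorm_smul_le_hammingNorm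
    · have hu₀ : u₀ = 0 := funext fun j =>
        h0 _ (Fin.lt_def.2 (by
          simp only [Function.comp_apply, halvesEquiv_inl_val, halvesEquiv_inr_val]; omega))
      have key := ih u₁ i (fun j hj => h0 _ (Fin.lt_def.2 (by
        simp only [halvesEquiv_inr_val]; exact Nat.add_lt_add_left hj _))) hi
      rw [hu₀, zero_add, smul_vecMul, hammingNorm_smul fun _ => IsSMulRegular.of_ne_zero (hβ _),
        halvesEquiv_inr_val, wt_two_pow_add i.isLt, pow_succ]
      omega

end PolarG

open Classical in
/-- If `u ∈ F_q^n` has `u_j = 0` for all `j < i` and `u_i ≠ 0`, then the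
Hamming weight of the codeword `c = u Gₙ` is at least `2 ^ wt(i)` (zero-based index `i`). -/
theorem stmt3 {F : Type} [Field F] (β : ℕ → F) (hβ : ∀ j, β j ≠ 0) (r : ℕ)
    (u : Fin (2 ^ r) → F) (i : Fin (2 ^ r))
    (h0 : ∀ j : Fin (2 ^ r), j < i → u j = 0) (hi : u i ≠ 0) :
    2 ^ wt (i : ℕ) ≤
      (Finset.univ.filter fun j : Fin (2 ^ r) => Matrix.vecMul u (polarG β r) j ≠ 0).card := by
  convert two_pow_wt_le_hammingNorm_vecMul_polarG β hβ r u i h0 hi using 1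
  unfold hammingNorm
  congr
end

section
/- Let W : F_q → Y be a discrete memoryless channel with uniformly distributed input, and define the combined channels W'(y_1,y_2 | v_1) = (1/q) Σ_{v_2 ∈ F_q} W(y_1 | v_1 + α v_2) W(y_2 | v_2) and W''(y_1,y_2,v_1 | v_2) = (1/q) W(y_1 | v_1 + α v_2) W(y_2 | v_2), where α ∈ F_q^*. Then the symmetric capacities satisfy I(W') + I(W'') = 2 I(W). -/
noncomputable section

open Classical in
/-- Probability of an event under the (finitely supported) weight function `p`. -/
def probOf {Ω : Type*} [Fintype Ω] (p : Ω → ℝ) (E : Ω → Prop) : ℝ :=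
  ∑ ω, if E ω then p ω else 0

/-- Shannon entropy of the random variable `X` on the finite probability space `(Ω, p)`. -/
def entropy {Ω A : Type*} [Fintype Ω] [Fintype A] (p : Ω → ℝ) (X : Ω → A) : ℝ :=
  -∑ a : A, probOf p (fun ω => X ω = a) * Real.log (probOf p (fun ω => X ω = a))

/-- Mutual information `I(X;Y)` on the finite probability space `(Ω, p)`. -/
def mutInfo {Ω A B : Type*} [Fintype Ω] [Fintype A] [Fintype B]
    (p : Ω → ℝ) (X : Ω → A) (Y : Ω → B) : ℝ :=
  entropy p X + entropy p Y - entropy p fun ω => (X ω, Y ω)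

/-- Conditional mutual information `I(X;Y∣Z)` on the finite probability space `(Ω, p)`. -/
def condMutInfo {Ω A B C : Type*} [Fintype Ω] [Fintype A] [Fintype B] [Fintype C]
    (p : Ω → ℝ) (X : Ω → A) (Y : Ω → B) (Z : Ω → C) : ℝ :=
  (entropy p fun ω => (X ω, Z ω)) + (entropy p fun ω => (Y ω, Z ω))
    - (entropy p fun ω => (X ω, Y ω, Z ω)) - entropy p Z

/-- The symmetric capacity `I(W)` of a channel `W : F → Y → ℝ` with uniform input:
the mutual information between input and output on `F × Y` with joint weight
`(1/|F|) W(y|v)`. -/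
def chanMI {F Y : Type*} [Fintype F] [Fintype Y] (W : F → Y → ℝ) : ℝ :=
  mutInfo (fun vy : F × Y => (1 / (Fintype.card F : ℝ)) * W vy.1 vy.2) Prod.fst Prod.snd

/-! Writing `Y = (Y₁, Y₂)`, entropy bookkeeping alone gives
`I(V₁; Y) + I(V₂; Y V₁) = I(V₁ V₂; Y) + I(V₁; V₂)`, and `I(V₁; V₂) = 0` since the inputs are
independent and uniform. As `(V₁, V₂) ↦ (C₁, C₂)` is a bijection, `I(V₁ V₂; Y) = I(C₁ C₂; Y₁ Y₂)`,
and `(C₁, Y₁)`, `(C₂, Y₂)` are independent copies of the input-output pair of `W`, so the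
mutual information is additive: `I(C₁ C₂; Y₁ Y₂) = 2 I(W)`. -/

open Finset Real

section InformationMeasures

variable {Ω Ω' A B A' B' : Type*} [Fintype Ω] [Fintype Ω']

lemma probOf_eq_sum_probOf_pair_left [Fintype B] (p : Ω → ℝ) (X : Ω → A) (Y : Ω → B) (a : A) :
    probOf p (fun ω => X ω = a) = ∑ b, probOf p (fun ω => (X ω, Y ω) = (a, b)) := by
  classical
  unfold probOf
  rw [sum_comm]
  exact sum_congr rfl fun ω _ => by by_cases h : X ω = a <;> simp [h]

lemma probOf_eq_sum_probOf_pair_right [Fintype A] (p : Ω → ℝ) (X : Ω → A) (Y : Ω → B) (b : B) :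
    probOf p (fun ω => Y ω = b) = ∑ a, probOf p (fun ω => (X ω, Y ω) = (a, b)) := by
  classical
  unfold probOf
  rw [sum_comm]
  exact sum_congr rfl fun ω _ => by by_cases h : Y ω = b <;> simp [h]

variable [Fintype A] [Fintype B] [Fintype A'] [Fintype B']

lemma entropy_eq_sum_negMulLog (p : Ω → ℝ) (X : Ω → A) :
    entropy p X = ∑ a, negMulLog (probOf p fun ω => X ω = a) := by
  simp only [entropy, negMulLog, neg_mul, sum_neg_distrib]

lemma probOf_comp_equiv_domain (e : Ω' ≃ Ω) (p : Ω → ℝ) (E : Ω → Prop) :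
    probOf (fun ω' => p (e ω')) (fun ω' => E (e ω')) = probOf p E := by
  classical
  exact e.sum_comp fun ω => if E ω then p ω else 0

lemma probOf_fst_eq (p : A × B → ℝ) (a : A) :
    probOf p (fun z => z.1 = a) = ∑ b, p (a, b) := by
  unfold probOf
  rw [Fintype.sum_prod_type, sum_eq_single a (fun a' _ ha' => by simp [ha']) (by simp)]
  simp

lemma probOf_eq_sum_of_equiv (e : A × B ≃ Ω) (p : Ω → ℝ) (X : Ω → A)
    (hX : ∀ ab, X (e ab) = ab.1) (a : A) :
    probOf p (fun ω => X ω = a) = ∑ b, p (e (a, b)) := by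
  rw [← probOf_comp_equiv_domain e]
  simp only [hX]
  exact probOf_fst_eq _ a

lemma sum_probOf_eq (p : Ω → ℝ) (X : Ω → A) :
    ∑ a, probOf p (fun ω => X ω = a) = ∑ ω, p ω := by
  classical
  unfold probOf
  rw [sum_comm]
  exact sum_congr rfl fun ω _ => by simp

lemma entropy_comp_equiv_domain (e : Ω' ≃ Ω) (p : Ω → ℝ) (X : Ω → A) :
    entropy (fun ω' => p (e ω')) (fun ω' => X (e ω')) = entropy p X := by
  simp only [entropy_eq_sum_negMulLog]
  exact sum_congr rfl fun a _ => by rw [probOf_comp_equiv_domain e p fun ω => X ω = a]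

lemma entropy_comp_equiv (e : A ≃ B) (p : Ω → ℝ) (X : Ω → A) :
    entropy p (fun ω => e (X ω)) = entropy p X := by
  simp only [entropy_eq_sum_negMulLog, ← e.sum_comp, e.apply_eq_iff_eq]

lemma mutInfo_comp_equiv_domain (e : Ω' ≃ Ω) (p : Ω → ℝ) (X : Ω → A) (Y : Ω → B) :
    mutInfo (fun ω' => p (e ω')) (fun ω' => X (e ω')) (fun ω' => Y (e ω')) = mutInfo p X Y := by
  unfold mutInfo
  rw [entropy_comp_equiv_domain e p X, entropy_comp_equiv_domain e p Y,
    entropy_comp_equiv_domain e p fun ω => (X ω, Y ω)]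

lemma mutInfo_comp_equiv_left (e : A ≃ A') (p : Ω → ℝ) (X : Ω → A) (Y : Ω → B) :
    mutInfo p (fun ω => e (X ω)) Y = mutInfo p X Y := by
  have hpair : entropy p (fun ω => (e (X ω), Y ω)) = entropy p fun ω => (X ω, Y ω) :=
    entropy_comp_equiv (e.prodCongr (Equiv.refl B)) p fun ω => (X ω, Y ω)
  rw [mutInfo, mutInfo, entropy_comp_equiv e, hpair]

lemma mutInfo_comp_equiv_right (e : B ≃ B') (p : Ω → ℝ) (X : Ω → A) (Y : Ω → B) :
    mutInfo p X (fun ω => e (Y ω)) = mutInfo p X Y := by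
  have hpair : entropy p (fun ω => (X ω, e (Y ω))) = entropy p fun ω => (X ω, Y ω) :=
    entropy_comp_equiv ((Equiv.refl A).prodCongr e) p fun ω => (X ω, Y ω)
  rw [mutInfo, mutInfo, entropy_comp_equiv e, hpair]

lemma mutInfo_add_mutInfo_pair (p : Ω → ℝ) (X : Ω → A) (X' : Ω → A') (Y : Ω → B) :
    mutInfo p X Y + mutInfo p X' (fun ω => (Y ω, X ω)) =
      mutInfo p (fun ω => (X ω, X' ω)) Y + mutInfo p X X' := by
  have hswap : entropy p (fun ω => (Y ω, X ω)) = entropy p (fun ω => (X ω, Y ω)) :=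
    entropy_comp_equiv (Equiv.prodComm A B) p fun ω => (X ω, Y ω)
  have hassoc : entropy p (fun ω => (X' ω, Y ω, X ω)) = entropy p (fun ω => ((X ω, X' ω), Y ω)) :=
    entropy_comp_equiv ((Equiv.prodAssoc A A' B).trans
      ((Equiv.prodComm A _).trans (Equiv.prodAssoc A' B A))) p fun ω => ((X ω, X' ω), Y ω)
  unfold mutInfo
  rw [hswap, hassoc]
  ring

lemma sum_negMulLog_mul {d₁ : A → ℝ} {d₂ : B → ℝ} (h₁ : ∑ a, d₁ a = 1) (h₂ : ∑ b, d₂ b = 1) :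
    ∑ ab : A × B, negMulLog (d₁ ab.1 * d₂ ab.2) =
      ∑ a, negMulLog (d₁ a) + ∑ b, negMulLog (d₂ b) := by
  simp only [negMulLog_mul, Fintype.sum_prod_type, sum_add_distrib, ← mul_sum, ← sum_mul, h₁, h₂,
    one_mul]

lemma entropy_pair_eq_add_of_probOf_eq_mul {p : Ω → ℝ} (hp : ∑ ω, p ω = 1) (X : Ω → A) (Y : Ω → B)
    (h : ∀ a b, probOf p (fun ω => (X ω, Y ω) = (a, b)) =
      probOf p (fun ω => X ω = a) * probOf p (fun ω => Y ω = b)) :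
    entropy p (fun ω => (X ω, Y ω)) = entropy p X + entropy p Y := by
  simp only [entropy_eq_sum_negMulLog]
  rw [← sum_negMulLog_mul (by rw [sum_probOf_eq, hp]) (by rw [sum_probOf_eq, hp])]
  exact sum_congr rfl fun ab _ => by rw [← h]

lemma mutInfo_eq_zero_of_probOf_eq_mul {p : Ω → ℝ} (hp : ∑ ω, p ω = 1) (X : Ω → A) (Y : Ω → B)
    (h : ∀ a b, probOf p (fun ω => (X ω, Y ω) = (a, b)) =
      probOf p (fun ω => X ω = a) * probOf p (fun ω => Y ω = b)) :
    mutInfo p X Y = 0 := by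
  rw [mutInfo, entropy_pair_eq_add_of_probOf_eq_mul hp X Y h]
  ring

lemma mutInfo_eq_zero_of_probOf_pair_eq_uniform [Nonempty A] [Nonempty B] {p : Ω → ℝ}
    (X : Ω → A) (Y : Ω → B)
    (h : ∀ a b, probOf p (fun ω => (X ω, Y ω) = (a, b)) =
      1 / (Fintype.card A : ℝ) * (1 / (Fintype.card B : ℝ))) :
    mutInfo p X Y = 0 := by
  have hA : (Fintype.card A : ℝ) ≠ 0 := Nat.cast_ne_zero.mpr Fintype.card_ne_zero
  have hB : (Fintype.card B : ℝ) ≠ 0 := Nat.cast_ne_zero.mpr Fintype.card_ne_zero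
  have hX : ∀ a, probOf p (fun ω => X ω = a) = 1 / (Fintype.card A : ℝ) := fun a => by
    rw [probOf_eq_sum_probOf_pair_left p X Y]
    simp only [h, sum_const, card_univ, nsmul_eq_mul]
    field_simp
  have hY : ∀ b, probOf p (fun ω => Y ω = b) = 1 / (Fintype.card B : ℝ) := fun b => by
    rw [probOf_eq_sum_probOf_pair_right p X Y]
    simp only [h, sum_const, card_univ, nsmul_eq_mul]
    field_simp
  have hp : ∑ ω, p ω = 1 := by
    rw [← sum_probOf_eq p X]
    simp only [hX, sum_const, card_univ, nsmul_eq_mul]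
    field_simp
  exact mutInfo_eq_zero_of_probOf_eq_mul hp X Y fun a b => by rw [h, hX, hY]

lemma probOf_prod_and (p₁ : Ω → ℝ) (p₂ : Ω' → ℝ) (E₁ : Ω → Prop) (E₂ : Ω' → Prop) :
    probOf (fun ω : Ω × Ω' => p₁ ω.1 * p₂ ω.2) (fun ω => E₁ ω.1 ∧ E₂ ω.2) =
      probOf p₁ E₁ * probOf p₂ E₂ := by
  unfold probOf
  rw [Fintype.sum_prod_type, sum_mul_sum]
  exact sum_congr rfl fun _ _ => sum_congr rfl fun _ _ => by split_ifs <;> simp_all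

lemma entropy_prod_weight {p₁ : Ω → ℝ} {p₂ : Ω' → ℝ} (hp₁ : ∑ ω, p₁ ω = 1) (hp₂ : ∑ ω, p₂ ω = 1)
    (X₁ : Ω → A) (X₂ : Ω' → B) :
    entropy (fun ω : Ω × Ω' => p₁ ω.1 * p₂ ω.2) (fun ω => (X₁ ω.1, X₂ ω.2)) =
      entropy p₁ X₁ + entropy p₂ X₂ := by
  have hlaw : ∀ a b, probOf (fun ω : Ω × Ω' => p₁ ω.1 * p₂ ω.2)
      (fun ω => (X₁ ω.1, X₂ ω.2) = (a, b)) =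
        probOf p₁ (fun ω => X₁ ω = a) * probOf p₂ (fun ω => X₂ ω = b) := fun a b => by
    rw [← probOf_prod_and]
    simp only [Prod.mk.injEq]
  simp only [entropy_eq_sum_negMulLog]
  rw [← sum_negMulLog_mul (by rw [sum_probOf_eq, hp₁]) (by rw [sum_probOf_eq, hp₂])]
  exact sum_congr rfl fun ab _ => by rw [← hlaw]

lemma mutInfo_prod_weight {p₁ : Ω → ℝ} {p₂ : Ω' → ℝ} (hp₁ : ∑ ω, p₁ ω = 1) (hp₂ : ∑ ω, p₂ ω = 1)
    (X₁ : Ω → A) (Y₁ : Ω → B) (X₂ : Ω' → A') (Y₂ : Ω' → B') :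
    mutInfo (fun ω : Ω × Ω' => p₁ ω.1 * p₂ ω.2) (fun ω => (X₁ ω.1, X₂ ω.2))
        (fun ω => (Y₁ ω.1, Y₂ ω.2)) =
      mutInfo p₁ X₁ Y₁ + mutInfo p₂ X₂ Y₂ := by
  have hjoint : entropy (fun ω : Ω × Ω' => p₁ ω.1 * p₂ ω.2)
      (fun ω => ((X₁ ω.1, X₂ ω.2), (Y₁ ω.1, Y₂ ω.2))) =
        entropy (fun ω : Ω × Ω' => p₁ ω.1 * p₂ ω.2)
          (fun ω => ((X₁ ω.1, Y₁ ω.1), (X₂ ω.2, Y₂ ω.2))) :=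
    entropy_comp_equiv (Equiv.prodProdProdComm A B A' B') (fun ω : Ω × Ω' => p₁ ω.1 * p₂ ω.2)
      fun ω => ((X₁ ω.1, Y₁ ω.1), (X₂ ω.2, Y₂ ω.2))
  simp only [mutInfo]
  rw [entropy_prod_weight hp₁ hp₂ X₁ X₂, entropy_prod_weight hp₁ hp₂ Y₁ Y₂, hjoint,
    entropy_prod_weight hp₁ hp₂ (fun ω => (X₁ ω, Y₁ ω)) fun ω => (X₂ ω, Y₂ ω)]
  ring

end InformationMeasures

section Polarization

variable {F Y : Type} [Field F]

def inputShear (α : F) : F × F ≃ F × F where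
  toFun c := (c.1 - α * c.2, c.2)
  invFun v := (v.1 + α * v.2, v.2)
  left_inv c := by simp
  right_inv v := by simp

-- coordinates `((C₁, Y₁), (C₂, Y₂))` of the two uses of `W`
def polarRelabel (α : F) : (F × Y) × F × Y ≃ F × F × Y × Y where
  toFun ω := (ω.1.1 - α * ω.2.1, ω.2.1, ω.1.2, ω.2.2)
  invFun z := ((z.1 + α * z.2.1, z.2.2.1), z.2.1, z.2.2.2)
  left_inv ω := by simp
  right_inv z := by simp

variable [Fintype F]

def chanJoint (W : F → Y → ℝ) : F × Y → ℝ :=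
  fun cy => 1 / (Fintype.card F : ℝ) * W cy.1 cy.2

def polarJoint (W : F → Y → ℝ) (α : F) : F × F × Y × Y → ℝ :=
  fun z => 1 / (Fintype.card F : ℝ) * (1 / (Fintype.card F : ℝ)) *
    W (z.1 + α * z.2.1) z.2.2.1 * W z.2.1 z.2.2.2

variable {W : F → Y → ℝ}

lemma polarJoint_polarRelabel (α : F) (ω : (F × Y) × F × Y) :
    polarJoint W α (polarRelabel α ω) = chanJoint W ω.1 * chanJoint W ω.2 := by
  simp [polarJoint, chanJoint, polarRelabel]
  ring

variable [Fintype Y]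

lemma sum_chanJoint (hW1 : ∀ c, ∑ y, W c y = 1) : ∑ ω, chanJoint W ω = 1 := by
  simp [chanJoint, Fintype.sum_prod_type, ← mul_sum, hW1]

lemma mutInfo_polarJoint_inputs_outputs (hW1 : ∀ c, ∑ y, W c y = 1) (α : F) :
    mutInfo (polarJoint W α) (fun z => (z.1, z.2.1)) (fun z => z.2.2) = 2 * chanMI W := by
  rw [← mutInfo_comp_equiv_domain (polarRelabel (Y := Y) α) (polarJoint W α) (fun z => (z.1, z.2.1))
    fun z => z.2.2]
  simp only [polarJoint_polarRelabel]
  change mutInfo (fun ω : (F × Y) × F × Y => chanJoint W ω.1 * chanJoint W ω.2)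
    (fun ω => inputShear α (ω.1.1, ω.2.1)) (fun ω => (ω.1.2, ω.2.2)) = _
  rw [mutInfo_comp_equiv_left, mutInfo_prod_weight (sum_chanJoint hW1) (sum_chanJoint hW1), two_mul]
  rfl

lemma probOf_polarJoint_inputs (hW1 : ∀ c, ∑ y, W c y = 1) (α a b : F) :
    probOf (polarJoint W α) (fun z => (z.1, z.2.1) = (a, b)) =
      1 / (Fintype.card F : ℝ) * (1 / (Fintype.card F : ℝ)) := by
  rw [probOf_eq_sum_of_equiv (Equiv.prodAssoc F F (Y × Y)) _ _ fun _ => rfl]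
  simp [polarJoint, Fintype.sum_prod_type, ← mul_sum, hW1]

lemma mutInfo_polarJoint_inputs (hW1 : ∀ c, ∑ y, W c y = 1) (α : F) :
    mutInfo (polarJoint W α) (fun z => z.1) (fun z => z.2.1) = 0 :=
  mutInfo_eq_zero_of_probOf_pair_eq_uniform _ _ (probOf_polarJoint_inputs hW1 α)

end Polarization

theorem stmt6_general {F Y : Type} [Field F] [Fintype F] [Fintype Y]
    (W : F → Y → ℝ) (hW1 : ∀ c, ∑ y, W c y = 1)
    (α : F) :
    letI q : ℝ := (Fintype.card F : ℝ)
    letI p : F × F × Y × Y → ℝ :=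
      fun z => (1 / q) * (1 / q) * W (z.1 + α * z.2.1) z.2.2.1 * W z.2.1 z.2.2.2
    mutInfo p (fun z => z.1) (fun z => (z.2.2.1, z.2.2.2)) +
      mutInfo p (fun z => z.2.1) (fun z => (z.2.2.1, z.2.2.2, z.1)) =
    2 * chanMI W := by
  change mutInfo (polarJoint W α) (fun z => z.1) (fun z => z.2.2) +
    mutInfo (polarJoint W α) (fun z => z.2.1) (fun z => Equiv.prodAssoc Y Y F (z.2.2, z.1)) = _
  rw [mutInfo_comp_equiv_right, mutInfo_add_mutInfo_pair, mutInfo_polarJoint_inputs_outputs hW1,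
    mutInfo_polarJoint_inputs hW1, add_zero]

/-- For the single-step `q`-ary polarization transform with inputs
`C₁ = V₁ + α V₂`, `C₂ = V₂` (`V₁, V₂` independent uniform on `F_q`, `α ≠ 0`) through two
independent copies of the channel `W`, the split-channel symmetric capacities satisfy
`I(W') + I(W'') = 2 I(W)`, where `I(W') = I(V₁; Y₁Y₂)` and `I(W'') = I(V₂; Y₁Y₂V₁)`. -/
theorem stmt6 {F Y : Type} [Field F] [Fintype F] [Fintype Y]
    (W : F → Y → ℝ) (hW0 : ∀ c y, 0 ≤ W c y) (hW1 : ∀ c, ∑ y, W c y = 1)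
    (α : F) (hα : α ≠ 0) :
    letI q : ℝ := (Fintype.card F : ℝ)
    letI p : F × F × Y × Y → ℝ :=
      fun z => (1 / q) * (1 / q) * W (z.1 + α * z.2.1) z.2.2.1 * W z.2.1 z.2.2.2
    mutInfo p (fun z => z.1) (fun z => (z.2.2.1, z.2.2.2)) +
      mutInfo p (fun z => z.2.1) (fun z => (z.2.2.1, z.2.2.2, z.1)) =
    2 * chanMI W :=
  stmt6_general W hW1 α
end
end
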